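/- There exists a constant C_E > 0 such that the following holds for every ε > 0: if μ̄ = ρ̄ω is a Gibbs critical point of E_{ε,A} (that is, ρ̄(x) = exp(W_{μ̄}(x)/ε) / ∫_S exp(W_{μ̄}(z)/ε) dω(z) for all x ∈ S) and h : S → ℝ is bounded measurable with ∫_S h dμ̄ = 0 and ‖h‖_∞ := sup_{x∈S} |h(x)| ≤ 1/2, then |E_{ε,A}((1+h)μ̄) − E_{ε,A}(μ̄) − (1/2)·(ε·∫_S h² dμ̄ − ∬_{S×S} K_A(x,y) h(x) h(y) dμ̄(x) dμ̄(y))| ≤ C_E·ε·‖h‖_∞·∫_S h² dμ̄. -/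

import Mathlib

open MeasureTheory Real Filter Topology

noncomputable section

/-- The unit sphere `S = 𝕊^{d-1}` in `ℝ^d`. -/
abbrev Sph (d : ℕ) : Type := Metric.sphere (0 : EuclideanSpace ℝ (Fin d)) 1

variable {d : ℕ}

/-- The bilinear form `⟨x, A y⟩` for the diagonal matrix `A = diag lam`. -/
def qA (lam : Fin d → ℝ) (x y : EuclideanSpace ℝ (Fin d)) : ℝ :=
  ∑ i, lam i * x i * y i

/-- The interaction kernel `K_A(x,y) = exp ⟨x, A y⟩`. -/
def Kker (lam : Fin d → ℝ) (x y : Sph d) : ℝ :=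
  Real.exp (qA lam (x : EuclideanSpace ℝ (Fin d)) (y : EuclideanSpace ℝ (Fin d)))

/-- The interaction energy `I_A(μ)`. -/
def IA (lam : Fin d → ℝ) (μ : Measure (Sph d)) : ℝ :=
  ∫ x, ∫ y, Kker lam x y ∂μ ∂μ

/-- The potential `W_μ(x) = ∫ K_A(x,y) dμ(y)`. -/
def WA (lam : Fin d → ℝ) (μ : Measure (Sph d)) (x : Sph d) : ℝ :=
  ∫ y, Kker lam x y ∂μ

open scoped Classical in
/-- Relative entropy of `μ` with respect to `ω`, with value `+∞` when `μ` is not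
absolutely continuous w.r.t. `ω` or the entropy integral diverges. -/
def Ent (ω μ : Measure (Sph d)) : EReal :=
  if μ ≪ ω ∧ Integrable (fun x => Real.log (μ.rnDeriv ω x).toReal) μ
  then ((∫ x, Real.log (μ.rnDeriv ω x).toReal ∂μ : ℝ) : EReal)
  else ⊤

/-- The free energy `E_{ε,A}(μ) = ε·Ent(μ) − (1/2)·I_A(μ)`. -/
def EA (lam : Fin d → ℝ) (ω : Measure (Sph d)) (ε : ℝ) (μ : Measure (Sph d)) : EReal :=
  (ε : EReal) * Ent ω μ - ((IA lam μ / 2 : ℝ) : EReal)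

/-- The antipodal map on the sphere. -/
def antip (x : Sph d) : Sph d :=
  ⟨-(x : EuclideanSpace ℝ (Fin d)), by
    have hx := x.2
    rw [mem_sphere_zero_iff_norm] at hx ⊢
    rwa [norm_neg]⟩

/-- The sphere self-map induced by a linear isometry equivalence of `ℝ^d`. -/
def sphMap (g : EuclideanSpace ℝ (Fin d) ≃ₗᵢ[ℝ] EuclideanSpace ℝ (Fin d)) (x : Sph d) : Sph d :=
  ⟨g (x : EuclideanSpace ℝ (Fin d)), by
    have hx := x.2
    rw [mem_sphere_zero_iff_norm] at hx ⊢
    rwa [g.norm_map]⟩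

/-- `ω` is the uniform probability measure on the sphere, characterised as a
rotation-invariant Borel probability measure. -/
def IsUniform (ω : Measure (Sph d)) : Prop :=
  IsProbabilityMeasure ω ∧
  ∀ g : EuclideanSpace ℝ (Fin d) ≃ₗᵢ[ℝ] EuclideanSpace ℝ (Fin d),
    Measure.map (sphMap g) ω = ω

/-- The (topological) support of a measure. -/
def msupport (μ : Measure (Sph d)) : Set (Sph d) :=
  {x | ∀ U : Set (Sph d), IsOpen U → x ∈ U → 0 < μ U}

/-- The set of global maximizers of the potential `W_ν`. -/
def argmaxW (lam : Fin d → ℝ) (ν : Measure (Sph d)) : Set (Sph d) :=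
  {x | ∀ y, WA lam ν y ≤ WA lam ν x}

/-- `μ` is a Gibbs critical point of `E_{ε,A}`. -/
def IsGibbs (lam : Fin d → ℝ) (ω : Measure (Sph d)) (ε : ℝ) (μ : Measure (Sph d)) : Prop :=
  IsProbabilityMeasure μ ∧
  μ = ω.withDensity (fun x => ENNReal.ofReal
    (Real.exp (WA lam μ x / ε) / ∫ z, Real.exp (WA lam μ z / ε) ∂ω))

/-- `μ` is a global minimizer of `E_{ε,A}` over Borel probability measures. -/
def IsMinimizer (lam : Fin d → ℝ) (ω : Measure (Sph d)) (ε : ℝ) (μ : Measure (Sph d)) : Prop :=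
  IsProbabilityMeasure μ ∧
  ∀ ν : Measure (Sph d), IsProbabilityMeasure ν → EA lam ω ε μ ≤ EA lam ω ε ν

/-- `m_ε`, the infimum of the free energy over probability measures. -/
def mEps (lam : Fin d → ℝ) (ω : Measure (Sph d)) (ε : ℝ) : EReal :=
  sInf {r : EReal | ∃ μ : Measure (Sph d), IsProbabilityMeasure μ ∧ EA lam ω ε μ = r}

/-! Put `ν = (1 + h) μ̄`. At a Gibbs point `log ρ̄ = W_{μ̄}/ε - log Z`, and `log Z` drops out
against `∫ h dμ̄ = 0`, so the first-order change `ε ∫ h log ρ̄ dμ̄` of the entropy term is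
`∫ h W_{μ̄} dμ̄`. As `K_A` is symmetric, the first-order change of `I_A` is `2 ∫ h W_{μ̄} dμ̄`, so
the linear terms cancel exactly and `E(ν) - E(μ̄) = ε ∫ (1 + h) log (1 + h) dμ̄ - (1/2) ∬ K_A h h`.
The pointwise bound `|(1 + t) log (1 + t) - t - t²/2| ≤ 4 |t| t²` for `|t| ≤ 1/2` gives
`C_E = 4`. -/

open scoped ENNReal

theorem abs_log_one_add_le_one {t : ℝ} (ht : |t| ≤ 1 / 2) : |Real.log (1 + t)| ≤ 1 := by
  obtain ⟨ht₁, ht₂⟩ := abs_le.1 ht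
  have hpos : 0 < 1 + t := by linarith
  have hinv : (1 + t)⁻¹ ≤ 2 := by rw [inv_le_comm₀ hpos two_pos]; linarith
  rw [abs_le]
  constructor
  · linarith [Real.one_sub_inv_le_log_of_pos hpos]
  · linarith [Real.log_le_sub_one_of_pos hpos]

theorem abs_one_add_mul_log_one_add_sub_le {t : ℝ} (ht : |t| ≤ 1 / 2) :
    |(1 + t) * Real.log (1 + t) - t - t ^ 2 / 2| ≤ 4 * |t| * t ^ 2 := by
  have hcube : |t| ^ 3 = |t| * t ^ 2 := by rw [pow_succ, sq_abs]; ring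
  have hr : |Real.log (1 + t) - (t - t ^ 2 / 2)| ≤ 2 * |t| * t ^ 2 := by
    have key := Real.abs_log_sub_add_sum_range_le (show |-t| < 1 by rw [abs_neg]; linarith) 2
    simp only [Finset.sum_range_succ, Finset.sum_range_zero, abs_neg, sub_neg_eq_add] at key
    calc |Real.log (1 + t) - (t - t ^ 2 / 2)| ≤ |t| ^ (2 + 1) / (1 - |t|) := by
          convert key using 2; push_cast; ring
      _ ≤ 2 * |t| * t ^ 2 := by
          rw [div_le_iff₀ (by linarith), hcube]
          nlinarith [mul_nonneg (abs_nonneg t) (sq_nonneg t)]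
  have h1t : |1 + t| ≤ 3 / 2 := by rw [abs_le]; constructor <;> linarith [abs_le.1 ht]
  calc |(1 + t) * Real.log (1 + t) - t - t ^ 2 / 2|
      = |-(t ^ 3 / 2) + (1 + t) * (Real.log (1 + t) - (t - t ^ 2 / 2))| := by ring_nf
    _ ≤ |t| * t ^ 2 / 2 + 3 / 2 * (2 * |t| * t ^ 2) := by
        refine (abs_add_le _ _).trans (add_le_add ?_ ?_)
        · rw [abs_neg, abs_div, abs_pow, hcube, abs_two]
        · rw [abs_mul]; gcongr
    _ ≤ 4 * |t| * t ^ 2 := by nlinarith [mul_nonneg (abs_nonneg t) (sq_nonneg t)]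

section WithDensity

variable {α β : Type*} [MeasurableSpace α] [MeasurableSpace β] {μ : Measure α}

theorem integral_withDensity_ofReal {f : α → ℝ} (hf : Measurable f) (hf0 : ∀ x, 0 ≤ f x)
    (g : α → ℝ) :
    ∫ x, g x ∂μ.withDensity (fun x => ENNReal.ofReal (f x)) = ∫ x, f x * g x ∂μ := by
  change ∫ x, g x ∂μ.withDensity (fun x => ((f x).toNNReal : ℝ≥0∞)) = _
  rw [integral_withDensity_eq_integral_smul hf.real_toNNReal]
  simp [NNReal.smul_def, Real.coe_toNNReal _ (hf0 _)]

theorem integral_prod_withDensity_ofReal {ν : Measure β} [SFinite ν] {f : α → ℝ} {g : β → ℝ}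
    (hf : Measurable f) (hg : Measurable g) (hf0 : ∀ x, 0 ≤ f x) (hg0 : ∀ y, 0 ≤ g y)
    (F : α × β → ℝ) :
    ∫ z, F z ∂(μ.withDensity fun x => ENNReal.ofReal (f x)).prod
        (ν.withDensity fun y => ENNReal.ofReal (g y)) =
      ∫ z, f z.1 * g z.2 * F z ∂μ.prod ν := by
  rw [prod_withDensity hf.ennreal_ofReal hg.ennreal_ofReal]
  simp_rw [← ENNReal.ofReal_mul (hf0 _)]
  exact integral_withDensity_ofReal (f := fun z : α × β => f z.1 * g z.2) (by fun_prop)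
    (fun z => mul_nonneg (hf0 z.1) (hg0 z.2)) F

theorem pos_of_withDensity_ofReal_div_ne_zero {f : α → ℝ} (hf : ∀ x, 0 ≤ f x) {Z : ℝ}
    (hμ : μ.withDensity (fun x => ENNReal.ofReal (f x / Z)) ≠ 0) : 0 < Z := by
  by_contra! hZ
  refine hμ ?_
  have hzero : (fun x => ENNReal.ofReal (f x / Z)) = 0 :=
    funext fun x => ENNReal.ofReal_eq_zero.2 (div_nonpos_of_nonneg_of_nonpos (hf x) hZ)
  rw [hzero, withDensity_zero]

theorem integral_snd_mul_uncurry_of_symm [SFinite μ] {K : α → α → ℝ} (hK : ∀ x y, K x y = K y x)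
    (h : α → ℝ) :
    ∫ z, h z.2 * Function.uncurry K z ∂μ.prod μ = ∫ z, h z.1 * Function.uncurry K z ∂μ.prod μ := by
  rw [← integral_prod_swap]
  congr 1 with z
  exact congrArg _ (hK z.2 z.1)

variable [IsFiniteMeasure μ]

theorem isFiniteMeasure_withDensity_ofReal_of_abs_le {f : α → ℝ} (hf : Measurable f) {C : ℝ}
    (hC : ∀ x, |f x| ≤ C) : IsFiniteMeasure (μ.withDensity fun x => ENNReal.ofReal (f x)) :=
  isFiniteMeasure_withDensity_ofReal (Integrable.of_bound hf.aestronglyMeasurable C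
    (ae_of_all _ hC)).2

theorem integrable_one_add_mul_log_one_add {h : α → ℝ} (hm : Measurable h)
    (hh : ∀ x, |h x| ≤ 1 / 2) : Integrable (fun x => (1 + h x) * Real.log (1 + h x)) μ :=
  .of_bound (by fun_prop) (3 / 2 * 1) (ae_of_all _ fun x => by
    rw [Real.norm_eq_abs, abs_mul]
    gcongr
    · linarith [abs_add_le 1 (h x), abs_one (α := ℝ), hh x]
    · exact abs_log_one_add_le_one (hh x))

theorem abs_integral_one_add_mul_log_one_add_sub_le {h : α → ℝ} (hm : Measurable h)
    (hh : ∀ x, |h x| ≤ 1 / 2) (h0 : ∫ x, h x ∂μ = 0) :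
    |∫ x, (1 + h x) * Real.log (1 + h x) ∂μ - (∫ x, h x ^ 2 ∂μ) / 2| ≤
      4 * (⨆ x, |h x|) * ∫ x, h x ^ 2 ∂μ := by
  have hsup : ∀ x, |h x| ≤ ⨆ x, |h x| := le_ciSup ⟨1 / 2, Set.forall_mem_range.2 hh⟩
  have ih : Integrable h μ := .of_bound hm.aestronglyMeasurable (1 / 2) (ae_of_all _ hh)
  have ih2 : Integrable (fun x => h x ^ 2) μ := ih.bdd_mul (c := 1 / 2) (by fun_prop)
    (ae_of_all _ hh) |>.congr (ae_of_all _ fun x => (sq (h x)).symm)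
  have iT := integrable_one_add_mul_log_one_add (μ := μ) hm hh
  have iT' : Integrable (fun x => (1 + h x) * Real.log (1 + h x) - h x) μ := iT.sub ih
  calc |∫ x, (1 + h x) * Real.log (1 + h x) ∂μ - (∫ x, h x ^ 2 ∂μ) / 2|
      = |∫ x, ((1 + h x) * Real.log (1 + h x) - h x - h x ^ 2 / 2) ∂μ| := by
        rw [integral_sub iT' (ih2.div_const 2), integral_sub iT ih, h0, integral_div, sub_zero]
    _ ≤ ∫ x, |(1 + h x) * Real.log (1 + h x) - h x - h x ^ 2 / 2| ∂μ :=
        abs_integral_le_integral_abs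
    _ ≤ ∫ x, 4 * (⨆ x, |h x|) * h x ^ 2 ∂μ := by
        refine integral_mono ((iT'.sub (ih2.div_const 2)).abs) (ih2.const_mul _)
          fun x => (abs_one_add_mul_log_one_add_sub_le (hh x)).trans ?_
        gcongr
        exact hsup x
    _ = 4 * (⨆ x, |h x|) * ∫ x, h x ^ 2 ∂μ := integral_const_mul _ _

theorem integral_integral_withDensity_one_add {K : α → α → ℝ}
    (hKm : Measurable (Function.uncurry K)) {C : ℝ} (hKC : ∀ x y, |K x y| ≤ C)
    (hK : ∀ x y, K x y = K y x) {h : α → ℝ} (hm : Measurable h) (hh : ∀ x, |h x| ≤ 1) :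
    ∫ x, ∫ y, K x y ∂μ.withDensity (fun x => ENNReal.ofReal (1 + h x))
        ∂μ.withDensity (fun x => ENNReal.ofReal (1 + h x)) =
      ∫ x, ∫ y, K x y ∂μ ∂μ + 2 * ∫ x, h x * ∫ y, K x y ∂μ ∂μ +
        ∫ x, ∫ y, K x y * h x * h y ∂μ ∂μ := by
  set ν := μ.withDensity fun x => ENNReal.ofReal (1 + h x)
  have h1 : ∀ x, 0 ≤ 1 + h x := fun x => by linarith [(abs_le.1 (hh x)).1]
  have : IsFiniteMeasure ν := isFiniteMeasure_withDensity_ofReal_of_abs_le (by fun_prop)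
    (C := 2) fun x => by linarith [abs_add_le 1 (h x), abs_one (α := ℝ), hh x]
  have hKν : Integrable (Function.uncurry K) (ν.prod ν) :=
    .of_bound hKm.aestronglyMeasurable C (ae_of_all _ fun z => hKC z.1 z.2)
  have hKμ : Integrable (Function.uncurry K) (μ.prod μ) :=
    .of_bound hKm.aestronglyMeasurable C (ae_of_all _ fun z => hKC z.1 z.2)
  have hmul : ∀ {g : α × α → ℝ}, Measurable g → (∀ z, |g z| ≤ 1) →
      Integrable (fun z => g z * Function.uncurry K z) (μ.prod μ) := fun hg hg1 =>
    hKμ.bdd_mul hg.aestronglyMeasurable (ae_of_all _ hg1)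
  have hfst := hmul (g := fun z => h z.1) (by fun_prop) fun z => hh z.1
  have hsnd := hmul (g := fun z => h z.2) (by fun_prop) fun z => hh z.2
  have hboth := hmul (g := fun z => h z.1 * h z.2) (by fun_prop) fun z => by
    rw [abs_mul]; exact mul_le_one₀ (hh z.1) (abs_nonneg _) (hh z.2)
  have hK1 : Integrable (fun z => Function.uncurry K z + h z.1 * Function.uncurry K z)
      (μ.prod μ) := hKμ.add hfst
  have hK2 : Integrable (fun z => Function.uncurry K z + h z.1 * Function.uncurry K z +
      h z.2 * Function.uncurry K z) (μ.prod μ) := hK1.add hsnd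
  calc ∫ x, ∫ y, K x y ∂ν ∂ν
      = ∫ z, Function.uncurry K z ∂ν.prod ν := (integral_prod _ hKν).symm
    _ = ∫ z, (1 + h z.1) * (1 + h z.2) * Function.uncurry K z ∂μ.prod μ :=
        integral_prod_withDensity_ofReal (by fun_prop) (by fun_prop) h1 h1 _
    _ = ∫ z, Function.uncurry K z ∂μ.prod μ + ∫ z, h z.1 * Function.uncurry K z ∂μ.prod μ +
          ∫ z, h z.2 * Function.uncurry K z ∂μ.prod μ +
          ∫ z, h z.1 * h z.2 * Function.uncurry K z ∂μ.prod μ := by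
        rw [← integral_add hKμ hfst, ← integral_add hK1 hsnd, ← integral_add hK2 hboth]
        exact integral_congr_ae (ae_of_all _ fun z => by ring)
    _ = ∫ z, Function.uncurry K z ∂μ.prod μ + 2 * ∫ z, h z.1 * Function.uncurry K z ∂μ.prod μ +
          ∫ z, h z.1 * h z.2 * Function.uncurry K z ∂μ.prod μ := by
        rw [integral_snd_mul_uncurry_of_symm hK]; ring
    _ = _ := by
        rw [integral_prod _ hKμ, integral_prod _ hfst, integral_prod _ hboth]
        simp only [Function.uncurry_apply_pair, integral_const_mul]
        congr 1
        exact integral_congr_ae (ae_of_all _ fun x =>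
          integral_congr_ae (ae_of_all _ fun y => by ring))

end WithDensity

theorem Kker_comm (lam : Fin d → ℝ) (x y : Sph d) : Kker lam x y = Kker lam y x := by
  simp only [Kker, qA, mul_right_comm]

theorem continuous_Kker (lam : Fin d → ℝ) : Continuous (Function.uncurry (Kker lam)) := by
  unfold Kker qA
  fun_prop

theorem continuous_WA (lam : Fin d → ℝ) (μ : Measure (Sph d)) [IsFiniteMeasure μ] :
    Continuous (WA lam μ) := by
  have := continuous_parametric_integral_of_continuous (μ := μ) (continuous_Kker lam)
    isCompact_univ
  rwa [Measure.restrict_univ] at this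

theorem Ent_withDensity_ofReal {ω : Measure (Sph d)} [SigmaFinite ω] {ρ : Sph d → ℝ}
    (hρm : Measurable ρ) (hρ0 : ∀ x, 0 ≤ ρ x)
    (hint : Integrable (fun x => Real.log (ρ x)) (ω.withDensity fun x => ENNReal.ofReal (ρ x))) :
    Ent ω (ω.withDensity fun x => ENNReal.ofReal (ρ x)) =
      ((∫ x, Real.log (ρ x) ∂ω.withDensity fun x => ENNReal.ofReal (ρ x) : ℝ) : EReal) := by
  have hac := withDensity_absolutelyContinuous ω fun x => ENNReal.ofReal (ρ x)
  have hlog : (fun x => Real.log ((ω.withDensity fun x => ENNReal.ofReal (ρ x)).rnDeriv ω x).toReal)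
      =ᵐ[ω.withDensity fun x => ENNReal.ofReal (ρ x)] fun x => Real.log (ρ x) := by
    filter_upwards [hac.ae_le (Measure.rnDeriv_withDensity ω hρm.ennreal_ofReal)] with x hx
    rw [hx, ENNReal.toReal_ofReal (hρ0 x)]
  rw [Ent, if_pos ⟨hac, (integrable_congr hlog).2 hint⟩, integral_congr_ae hlog]

theorem Ent_withDensity_one_add {ω : Measure (Sph d)} [SigmaFinite ω] {μ : Measure (Sph d)}
    [IsFiniteMeasure μ] {ρ : Sph d → ℝ} (hμ : μ = ω.withDensity fun x => ENNReal.ofReal (ρ x))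
    (hρm : Measurable ρ) (hρ : ∀ x, 0 < ρ x) {B : ℝ} (hB : ∀ x, |Real.log (ρ x)| ≤ B)
    {h : Sph d → ℝ} (hm : Measurable h) (hh : ∀ x, |h x| ≤ 1 / 2) :
    Ent ω (μ.withDensity fun x => ENNReal.ofReal (1 + h x)) =
      ((∫ x, Real.log (ρ x) ∂μ + ∫ x, h x * Real.log (ρ x) ∂μ +
        ∫ x, (1 + h x) * Real.log (1 + h x) ∂μ : ℝ) : EReal) := by
  have h1 : ∀ x, 0 < 1 + h x := fun x => by linarith [(abs_le.1 (hh x)).1]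
  have hlog : ∀ x, Real.log (ρ x * (1 + h x)) = Real.log (ρ x) + Real.log (1 + h x) :=
    fun x => Real.log_mul (hρ x).ne' (h1 x).ne'
  have hν : μ.withDensity (fun x => ENNReal.ofReal (1 + h x)) =
      ω.withDensity fun x => ENNReal.ofReal (ρ x * (1 + h x)) := by
    rw [hμ, ← withDensity_mul ω hρm.ennreal_ofReal (by fun_prop)]
    congr 1 with x
    exact (ENNReal.ofReal_mul (hρ x).le).symm
  have : IsFiniteMeasure (μ.withDensity fun x => ENNReal.ofReal (1 + h x)) :=
    isFiniteMeasure_withDensity_ofReal_of_abs_le (by fun_prop) (C := 3 / 2) fun x => by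
      linarith [abs_add_le 1 (h x), abs_one (α := ℝ), hh x]
  have ilogρ : Integrable (fun x => Real.log (ρ x)) μ :=
    .of_bound hρm.log.aestronglyMeasurable B (ae_of_all _ hB)
  have ihlogρ : Integrable (fun x => h x * Real.log (ρ x)) μ :=
    ilogρ.bdd_mul (c := 1 / 2) hm.aestronglyMeasurable (ae_of_all _ hh)
  have iρ : Integrable (fun x => Real.log (ρ x) + h x * Real.log (ρ x)) μ := ilogρ.add ihlogρ
  have ilog : Integrable (fun x => Real.log (ρ x * (1 + h x)))
      (μ.withDensity fun x => ENNReal.ofReal (1 + h x)) :=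
    .of_bound (hρm.mul (measurable_const.add hm)).log.aestronglyMeasurable (B + 1)
      (ae_of_all _ fun x => by
      rw [hlog, Real.norm_eq_abs]
      linarith [abs_add_le (Real.log (ρ x)) (Real.log (1 + h x)), hB x,
        abs_log_one_add_le_one (hh x)])
  rw [hν, Ent_withDensity_ofReal (by fun_prop) (fun x => mul_nonneg (hρ x).le (h1 x).le)
    (hν ▸ ilog), ← hν, integral_withDensity_ofReal (by fun_prop) fun x => (h1 x).le,
    ← integral_add ilogρ ihlogρ, ← integral_add iρ (integrable_one_add_mul_log_one_add hm hh)]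
  congr 2 with x
  rw [hlog]
  ring

theorem integral_exp_WA_div_pos {lam : Fin d → ℝ} {ω μ : Measure (Sph d)} [NeZero μ] {ε : ℝ}
    {ρ : Sph d → ℝ} (hμ : μ = ω.withDensity fun x => ENNReal.ofReal (ρ x))
    (hρ : ∀ x, ρ x = Real.exp (WA lam μ x / ε) / ∫ z, Real.exp (WA lam μ z / ε) ∂ω) :
    0 < ∫ z, Real.exp (WA lam μ z / ε) ∂ω := by
  have hne : ω.withDensity (fun x => ENNReal.ofReal (ρ x)) ≠ 0 := hμ ▸ NeZero.ne μ
  simp only [hρ] at hne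
  exact pos_of_withDensity_ofReal_div_ne_zero (fun x => (Real.exp_pos _).le) hne

theorem EA_withDensity_one_add_sub_EA {lam : Fin d → ℝ} {ω : Measure (Sph d)} [SigmaFinite ω]
    {ε : ℝ} (hε : ε ≠ 0) {μ : Measure (Sph d)} [IsFiniteMeasure μ] [NeZero μ] {ρ : Sph d → ℝ}
    (hμ : μ = ω.withDensity fun x => ENNReal.ofReal (ρ x))
    (hρ : ∀ x, ρ x = Real.exp (WA lam μ x / ε) / ∫ z, Real.exp (WA lam μ z / ε) ∂ω)
    {h : Sph d → ℝ} (hm : Measurable h) (h0 : ∫ x, h x ∂μ = 0) (hh : ∀ x, |h x| ≤ 1 / 2) :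
    EA lam ω ε (μ.withDensity fun x => ENNReal.ofReal (1 + h x)) - EA lam ω ε μ =
      ((ε * ∫ x, (1 + h x) * Real.log (1 + h x) ∂μ -
        (∫ x, ∫ y, Kker lam x y * h x * h y ∂μ ∂μ) / 2 : ℝ) : EReal) := by
  set Z := ∫ z, Real.exp (WA lam μ z / ε) ∂ω
  have hZ : 0 < Z := integral_exp_WA_div_pos hμ hρ
  have hρpos : ∀ x, 0 < ρ x := fun x => hρ x ▸ div_pos (Real.exp_pos _) hZ
  have hlogρ : ∀ x, Real.log (ρ x) = WA lam μ x / ε - Real.log Z := fun x => by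
    rw [hρ x, Real.log_div (Real.exp_pos _).ne' hZ.ne', Real.log_exp]
  have hρc : Continuous ρ := by
    have := continuous_WA lam μ
    rw [funext hρ]
    fun_prop
  obtain ⟨B, hB⟩ := (HasCompactSupport.of_compactSpace _).exists_bound_of_continuous
    (hρc.log fun x => (hρpos x).ne')
  obtain ⟨C, hC⟩ :=
    (HasCompactSupport.of_compactSpace _).exists_bound_of_continuous (continuous_Kker lam)
  have ih : Integrable h μ := .of_bound hm.aestronglyMeasurable _ (ae_of_all _ hh)
  have ilogρ : Integrable (fun x => Real.log (ρ x)) μ :=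
    .of_bound hρc.measurable.log.aestronglyMeasurable B (ae_of_all _ hB)
  have ihlogρ : Integrable (fun x => h x * Real.log (ρ x)) μ :=
    ilogρ.bdd_mul (c := 1 / 2) hm.aestronglyMeasurable (ae_of_all _ hh)
  have hεhlogρ : ε * ∫ x, h x * Real.log (ρ x) ∂μ = ∫ x, h x * WA lam μ x ∂μ := by
    have hhW : ∀ x, h x * WA lam μ x = ε * (h x * Real.log (ρ x)) + ε * Real.log Z * h x :=
      fun x => by rw [hlogρ]; field_simp; ring
    simp_rw [hhW]
    rw [integral_add (ihlogρ.const_mul ε) (ih.const_mul _), integral_const_mul,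
      integral_const_mul, h0, mul_zero, add_zero]
  have hEntμ : Ent ω μ = ((∫ x, Real.log (ρ x) ∂μ : ℝ) : EReal) := by
    rw [hμ] at ilogρ ⊢
    exact Ent_withDensity_ofReal hρc.measurable (fun x => (hρpos x).le) ilogρ
  rw [EA, EA, Ent_withDensity_one_add hμ hρc.measurable hρpos hB hm hh, hEntμ, IA, IA,
    integral_integral_withDensity_one_add (continuous_Kker lam).measurable
      (fun x y => hC (x, y)) (Kker_comm lam) hm fun x => (hh x).trans (by norm_num)]
  norm_cast
  unfold WA at hεhlogρ
  linear_combination hεhlogρ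

/-- quantitative free-energy Taylor remainder bound in the density
chart at a Gibbs critical point. -/
theorem stmt18 (d : ℕ) (lam : Fin d → ℝ) (ω : Measure (Sph d)) (hω : IsUniform ω) :
    ∃ C_E : ℝ, 0 < C_E ∧ ∀ ε : ℝ, 0 < ε →
      ∀ μbar : Measure (Sph d), ∀ ρbar : Sph d → ℝ,
        IsProbabilityMeasure μbar →
        μbar = ω.withDensity (fun x => ENNReal.ofReal (ρbar x)) →
        (∀ x, ρbar x = Real.exp (WA lam μbar x / ε) / ∫ z, Real.exp (WA lam μbar z / ε) ∂ω) →
        ∀ h : Sph d → ℝ, Measurable h →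
          (∫ x, h x ∂μbar) = 0 →
          (∀ x, |h x| ≤ 1 / 2) →
          ((((1 / 2) * (ε * ∫ x, h x ^ 2 ∂μbar -
                  ∫ x, ∫ y, Kker lam x y * h x * h y ∂μbar ∂μbar) -
                C_E * ε * (⨆ x, |h x|) * ∫ x, h x ^ 2 ∂μbar : ℝ)) : EReal) ≤
              EA lam ω ε (μbar.withDensity (fun x => ENNReal.ofReal (1 + h x))) -
                EA lam ω ε μbar ∧
            EA lam ω ε (μbar.withDensity (fun x => ENNReal.ofReal (1 + h x))) -
                EA lam ω ε μbar ≤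
              ((((1 / 2) * (ε * ∫ x, h x ^ 2 ∂μbar -
                    ∫ x, ∫ y, Kker lam x y * h x * h y ∂μbar ∂μbar) +
                  C_E * ε * (⨆ x, |h x|) * ∫ x, h x ^ 2 ∂μbar : ℝ)) : EReal) := by
  have := hω.1
  refine ⟨4, by norm_num, fun ε hε μbar ρbar _ hμ hρ h hm h0 hh => ?_⟩
  rw [EA_withDensity_one_add_sub_EA hε.ne' hμ hρ hm h0 hh, EReal.coe_le_coe_iff,
    EReal.coe_le_coe_iff]
  obtain ⟨hlower, hupper⟩ := abs_le.1 (abs_integral_one_add_mul_log_one_add_sub_le hm hh h0)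
  constructor
  · linarith [mul_le_mul_of_nonneg_left hlower hε.le]
  · linarith [mul_le_mul_of_nonneg_left hupper hε.le]

end
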